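/- If c < v, then the pure strategy HH (the first standard basis vector e₁ of ℝ⁴) is a strict symmetric Nash equilibrium of the asymmetric Hawk-Dove game: for every mixed strategy σ ∈ ℝ⁴ (entries nonnegative, summing to 1), σᵀ A e₁ ≤ e₁ᵀ A e₁ = (v−c)/2, with strict inequality whenever σ ≠ e₁. -/
import Mathlib


open Matrix

noncomputable section

/-- The payoff matrix of the asymmetric Hawk-Dove game, with rows and columns
indexed by the pure strategies (HH, HD, DH, DD). -/
def A (v c : ℝ) : Matrix (Fin 4) (Fin 4) ℝ :=
  !![(v - c)/2, (3*v - c)/4, (3*v - c)/4, v;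
     (v - c)/4, v/2,         (2*v - c)/4, 3*v/4;
     (v - c)/4, (2*v - c)/4, v/2,         3*v/4;
     0,         v/4,         v/4,         v/2]

theorem strict_nash_HH (v c : ℝ) (hc : c < v) :
    (Pi.single (0 : Fin 4) (1 : ℝ)) ⬝ᵥ (A v c).mulVec (Pi.single 0 1) = (v - c)/2 ∧
    ∀ σ : Fin 4 → ℝ, (∀ i, 0 ≤ σ i) → (∑ i, σ i) = 1 →
      (σ ⬝ᵥ (A v c).mulVec (Pi.single 0 1)
        ≤ (Pi.single (0 : Fin 4) (1 : ℝ)) ⬝ᵥ (A v c).mulVec (Pi.single 0 1) ∧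
      (σ ≠ Pi.single 0 1 →
        σ ⬝ᵥ (A v c).mulVec (Pi.single 0 1)
          < (Pi.single (0 : Fin 4) (1 : ℝ)) ⬝ᵥ (A v c).mulVec (Pi.single 0 1))) := by
  have key : ∀ σ : Fin 4 → ℝ,
      σ ⬝ᵥ (A v c).mulVec (Pi.single 0 1)
        = σ 0 * ((v - c)/2) + σ 1 * ((v - c)/4) + σ 2 * ((v - c)/4) := by
    intro σ
    simp [dotProduct, Matrix.mulVec, Fin.sum_univ_four, A, Pi.single_apply]
  have key0 : (Pi.single (0 : Fin 4) (1 : ℝ)) ⬝ᵥ (A v c).mulVec (Pi.single 0 1)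
      = (v - c)/2 := by
    rw [key]
    simp [Pi.single_apply]
  refine ⟨key0, fun σ hnn hsum => ?_⟩
  have hs : σ 0 + σ 1 + σ 2 + σ 3 = 1 := by
    simpa [Fin.sum_univ_four] using hsum
  rw [key, key0]
  constructor
  · nlinarith [hnn 0, hnn 1, hnn 2, hnn 3, sub_pos.mpr hc]
  · intro hne
    have h0 : σ 0 < 1 := by
      rcases lt_or_ge (σ 0) 1 with h | h
      · exact h
      · exfalso
        apply hne
        have h1 : σ 1 = 0 := by nlinarith [hnn 1, hnn 2, hnn 3]
        have h2 : σ 2 = 0 := by nlinarith [hnn 1, hnn 2, hnn 3]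
        have h3 : σ 3 = 0 := by nlinarith [hnn 1, hnn 2, hnn 3]
        have h0' : σ 0 = 1 := by nlinarith
        funext i
        fin_cases i <;> simp [h0', h1, h2, h3, Pi.single_apply]
    nlinarith [hnn 1, hnn 2, hnn 3, sub_pos.mpr hc]
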